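/- arXiv:1401.3933 — 6 statements merged into one kernel-verified Lean document; each statement's English description precedes it below -/
import Mathlib

section
/- Let τ > 0, μ > 0, let λ : ℝ → ℝ and F^c : ℝ → ℝ be locally Lipschitz with λ(u) > 0 and F^c(x) > 0 for all u, x, and let s : ℝ → ℝ be differentiable with continuous derivative ṡ. If w₁, w₂ : [0,τ] → ℝ are differentiable functions with w₁(0) = w₂(0) = 0, with 0 ≤ wᵢ(t) ≤ t for all t ∈ [0,τ], and both satisfy the head-of-line waiting-time ODE ẇ(t) = 1 − (ṡ(t) + μ s(t)) / (λ(t − w(t)) · F^c(w(t))) for all t ∈ [0,τ], then w₁(t) = w₂(t) for all t ∈ [0,τ]. -/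
/-!
The right-hand side is `1 - b t * g (t, w)` with `b = ṡ + μ s` and
`g (t, w) = (λ (t - w) * F^c w)⁻¹`. Since `λ` and `F^c` are locally Lipschitz and never vanish,
`g` is locally Lipschitz on `ℝ × ℝ`, hence Lipschitz on the compact square `[0, τ]²`; as `b` is
bounded on `[0, τ]`, the right-hand side is Lipschitz in `w ∈ [0, τ]` uniformly in `t ∈ [0, τ]`.
Both solutions stay in that strip (`0 ≤ w t ≤ t`), so Grönwall's inequality forces them to agree.
-/

open Set

section LocallyLipschitz

variable {α β : Type*} [PseudoMetricSpace α] [PseudoMetricSpace β]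
  {𝕂 : Type*} [RCLike 𝕂] {E F : Type*} [NormedAddCommGroup E] [NormedSpace 𝕂 E]
  [NormedAddCommGroup F] [NormedSpace 𝕂 F]

theorem LocallyLipschitz.comp_of_contDiffAt {φ : E → F} {f : α → E} (hf : LocallyLipschitz f)
    (hφ : ∀ x, ContDiffAt 𝕂 1 φ (f x)) : LocallyLipschitz (φ ∘ f) := by
  intro x
  obtain ⟨Kφ, u, hu, hφu⟩ := (hφ x).exists_lipschitzOnWith
  obtain ⟨Kf, t, ht, hft⟩ := hf x
  exact ⟨Kφ * Kf, t ∩ f ⁻¹' u, Filter.inter_mem ht (hf.continuous.continuousAt hu),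
    hφu.comp (hft.mono inter_subset_left) fun _ hy ↦ hy.2⟩

theorem LocallyLipschitz.smul {c : α → 𝕂} {f : α → E} (hc : LocallyLipschitz c)
    (hf : LocallyLipschitz f) : LocallyLipschitz fun x ↦ c x • f x :=
  (hc.prodMk hf).comp_of_contDiffAt fun _ ↦ (contDiff_smul (𝕜 := 𝕂)).contDiffAt

theorem LocallyLipschitz.inv₀ {f : α → 𝕂} (hf : LocallyLipschitz f) (h0 : ∀ x, f x ≠ 0) :
    LocallyLipschitz fun x ↦ (f x)⁻¹ :=
  hf.comp_of_contDiffAt fun x ↦ contDiffAt_inv 𝕂 (h0 x)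

theorem LocallyLipschitz.exists_forall_lipschitzOnWith_smul {c : α → 𝕂} {f : α × β → E}
    (hf : LocallyLipschitz f) {s : Set α} {t : Set β} (hs : IsCompact s) (ht : IsCompact t)
    (hc : ContinuousOn c s) : ∃ K, ∀ a ∈ s, LipschitzOnWith K (fun x ↦ c a • f (a, x)) t := by
  obtain ⟨Kf, hKf⟩ := hf.locallyLipschitzOn.exists_lipschitzOnWith_of_compact (hs.prod ht)
  obtain ⟨C, hC⟩ := (hs.image_of_continuousOn hc.nnnorm).bddAbove
  refine ⟨C * Kf, fun a ha ↦ ?_⟩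
  have hfa : LipschitzOnWith (Kf * 1) (fun x ↦ f (a, x)) t :=
    hKf.comp (LipschitzWith.prodMk_left a).lipschitzOnWith fun _ hx ↦ mk_mem_prod ha hx
  rw [mul_one] at hfa
  exact ((lipschitzWith_smul (c a)).comp_lipschitzOnWith hfa).weaken
    (mul_le_mul_left (hC (mem_image_of_mem _ ha)) Kf)

end LocallyLipschitz

theorem ODE_solution_unique_of_hasDerivWithinAt_Icc {E : Type*} [NormedAddCommGroup E]
    [NormedSpace ℝ E] {v : ℝ → E → E} {s : ℝ → Set E} {K : NNReal} {f g : ℝ → E} {a b : ℝ}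
    (hv : ∀ t ∈ Ico a b, LipschitzOnWith K (v t) (s t))
    (hf : ∀ t ∈ Icc a b, HasDerivWithinAt f (v t (f t)) (Icc a b) t)
    (hfs : ∀ t ∈ Ico a b, f t ∈ s t)
    (hg : ∀ t ∈ Icc a b, HasDerivWithinAt g (v t (g t)) (Icc a b) t)
    (hgs : ∀ t ∈ Ico a b, g t ∈ s t)
    (ha : f a = g a) :
    EqOn f g (Icc a b) :=
  have toIci {h : ℝ → E} (hh : ∀ t ∈ Icc a b, HasDerivWithinAt h (v t (h t)) (Icc a b) t)
      (t : ℝ) (ht : t ∈ Ico a b) : HasDerivWithinAt h (v t (h t)) (Ici t) t :=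
    (hh t (Ico_subset_Icc_self ht)).mono_of_mem_nhdsWithin (Icc_mem_nhdsGE_of_mem ht)
  ODE_solution_unique_of_mem_Icc_right hv (fun t ht ↦ (hf t ht).continuousWithinAt) (toIci hf)
    hfs (fun t ht ↦ (hg t ht).continuousWithinAt) (toIci hg) hgs ha

theorem exists_forall_lipschitzOnWith_hwt_rhs {lam Fc b : ℝ → ℝ} (hlam : LocallyLipschitz lam)
    (hFc : LocallyLipschitz Fc) (hlam0 : ∀ u, lam u ≠ 0) (hFc0 : ∀ x, Fc x ≠ 0)
    {s t : Set ℝ} (hs : IsCompact s) (ht : IsCompact t) (hb : ContinuousOn b s) :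
    ∃ K, ∀ a ∈ s, LipschitzOnWith K (fun x ↦ 1 - b a / (lam (a - x) * Fc x)) t := by
  have hden : LocallyLipschitz fun p : ℝ × ℝ ↦ (lam (p.1 - p.2) * Fc p.2)⁻¹ :=
    ((hlam.comp (LipschitzWith.prod_fst.sub LipschitzWith.prod_snd).locallyLipschitz).smul
      (hFc.comp LipschitzWith.prod_snd.locallyLipschitz)).inv₀
      fun _ ↦ mul_ne_zero (hlam0 _) (hFc0 _)
  obtain ⟨K, hK⟩ := hden.exists_forall_lipschitzOnWith_smul hs ht hb
  refine ⟨K, fun a ha ↦ ?_⟩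
  simpa [div_eq_mul_inv] using (LipschitzWith.const (1 : ℝ)).lipschitzOnWith.sub (hK a ha)

theorem hwt_ode_uniqueness_general
    (τ μ : ℝ)
    (lam Fc : ℝ → ℝ)
    (hlamLip : LocallyLipschitz lam) (hFcLip : LocallyLipschitz Fc)
    (hlam_pos : ∀ u, 0 < lam u) (hFc_pos : ∀ x, 0 < Fc x)
    (s s' : ℝ → ℝ)
    (hs : ∀ t, HasDerivAt s (s' t) t) (hs' : Continuous s')
    (w₁ w₂ : ℝ → ℝ)
    (hw₁0 : w₁ 0 = 0) (hw₂0 : w₂ 0 = 0)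
    (hw₁b : ∀ t ∈ Set.Icc (0:ℝ) τ, 0 ≤ w₁ t ∧ w₁ t ≤ t)
    (hw₂b : ∀ t ∈ Set.Icc (0:ℝ) τ, 0 ≤ w₂ t ∧ w₂ t ≤ t)
    (hw₁ode : ∀ t ∈ Set.Icc (0:ℝ) τ,
      HasDerivWithinAt w₁ (1 - (s' t + μ * s t) / (lam (t - w₁ t) * Fc (w₁ t)))
        (Set.Icc (0:ℝ) τ) t)
    (hw₂ode : ∀ t ∈ Set.Icc (0:ℝ) τ,
      HasDerivWithinAt w₂ (1 - (s' t + μ * s t) / (lam (t - w₂ t) * Fc (w₂ t)))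
        (Set.Icc (0:ℝ) τ) t) :
    ∀ t ∈ Set.Icc (0:ℝ) τ, w₁ t = w₂ t := by
  have hs_cont : Continuous s := continuous_iff_continuousAt.2 fun t ↦ (hs t).continuousAt
  obtain ⟨K, hK⟩ := exists_forall_lipschitzOnWith_hwt_rhs hlamLip hFcLip
    (fun u ↦ (hlam_pos u).ne') (fun x ↦ (hFc_pos x).ne') isCompact_Icc isCompact_Icc
    (hs'.add (continuous_const.mul hs_cont)).continuousOn (s := Icc 0 τ) (t := Icc 0 τ)
  have mem_strip {w : ℝ → ℝ} (hw : ∀ t ∈ Icc 0 τ, 0 ≤ w t ∧ w t ≤ t) (t : ℝ) (ht : t ∈ Ico 0 τ) :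
      w t ∈ Icc 0 τ :=
    ⟨(hw t (Ico_subset_Icc_self ht)).1, (hw t (Ico_subset_Icc_self ht)).2.trans ht.2.le⟩
  exact ODE_solution_unique_of_hasDerivWithinAt_Icc (fun t ht ↦ hK t (Ico_subset_Icc_self ht))
    hw₁ode (mem_strip hw₁b) hw₂ode (mem_strip hw₂b) (hw₁0.trans hw₂0.symm)

/-- Uniqueness of solutions of the head-of-line waiting-time ODE
`ẇ(t) = 1 − (ṡ(t) + μ s(t)) / (λ(t − w(t)) · F^c(w(t)))` on `[0, τ]`. -/
theorem hwt_ode_uniqueness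
    (τ μ : ℝ) (hτ : 0 < τ) (hμ : 0 < μ)
    (lam Fc : ℝ → ℝ)
    (hlamLip : LocallyLipschitz lam) (hFcLip : LocallyLipschitz Fc)
    (hlam_pos : ∀ u, 0 < lam u) (hFc_pos : ∀ x, 0 < Fc x)
    (s s' : ℝ → ℝ)
    (hs : ∀ t, HasDerivAt s (s' t) t) (hs' : Continuous s')
    (w₁ w₂ : ℝ → ℝ)
    (hw₁0 : w₁ 0 = 0) (hw₂0 : w₂ 0 = 0)
    (hw₁b : ∀ t ∈ Set.Icc (0:ℝ) τ, 0 ≤ w₁ t ∧ w₁ t ≤ t)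
    (hw₂b : ∀ t ∈ Set.Icc (0:ℝ) τ, 0 ≤ w₂ t ∧ w₂ t ≤ t)
    (hw₁ode : ∀ t ∈ Set.Icc (0:ℝ) τ,
      HasDerivWithinAt w₁ (1 - (s' t + μ * s t) / (lam (t - w₁ t) * Fc (w₁ t)))
        (Set.Icc (0:ℝ) τ) t)
    (hw₂ode : ∀ t ∈ Set.Icc (0:ℝ) τ,
      HasDerivWithinAt w₂ (1 - (s' t + μ * s t) / (lam (t - w₂ t) * Fc (w₂ t)))
        (Set.Icc (0:ℝ) τ) t) :
    ∀ t ∈ Set.Icc (0:ℝ) τ, w₁ t = w₂ t :=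
  hwt_ode_uniqueness_general τ μ lam Fc hlamLip hFcLip hlam_pos hFc_pos s s' hs hs' w₁ w₂ hw₁0 hw₂0
    hw₁b hw₂b hw₁ode hw₂ode
end

section
/- Let γ ∈ (0,1] and let w : [0,∞) → [0,∞) be continuous and satisfy w(t₂) − w(t₁) ≤ (1−γ)(t₂ − t₁) for all 0 ≤ t₁ ≤ t₂. Then for every t ≥ 0 there exists a unique x ≥ 0 such that x = w(t + x). -/
/-!
Put `u x = w (t + x)`. The one-sided bound makes `x ↦ u x - x` decrease with slope at most `-γ`,
so it is injective, and it goes from `u 0 ≥ 0` at `x = 0` to a nonpositive value at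
`x = u 0 / γ`; the intermediate value theorem supplies the root.
-/

open Set

theorem strictAntiOn_sub_id_of_sub_le_mul_sub {u : ℝ → ℝ} {s : Set ℝ} {c : ℝ} (hc : c < 1)
    (hu : ∀ x ∈ s, ∀ y ∈ s, x ≤ y → u y - u x ≤ c * (y - x)) :
    StrictAntiOn (fun x => u x - x) s := by
  intro x hx y hy hxy
  have := hu x hx y hy hxy.le
  nlinarith

theorem existsUnique_zero_of_strictAntiOn {f : ℝ → ℝ} {a b : ℝ} (hab : a ≤ b)
    (hcont : ContinuousOn f (Ici a)) (hanti : StrictAntiOn f (Ici a))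
    (ha : 0 ≤ f a) (hb : f b ≤ 0) :
    ∃! x, a ≤ x ∧ f x = 0 := by
  obtain ⟨x, hx, hfx⟩ :=
    intermediate_value_Icc' hab (hcont.mono Icc_subset_Ici_self) ⟨hb, ha⟩
  refine ⟨x, ⟨hx.1, hfx⟩, fun y ⟨hy, hfy⟩ => ?_⟩
  exact hanti.injOn (mem_Ici.2 hy) (mem_Ici.2 hx.1) (hfy.trans hfx.symm)

theorem existsUnique_fixedPoint_of_sub_le_mul_sub {u : ℝ → ℝ} {c : ℝ} (hc : c < 1)
    (h0 : 0 ≤ u 0) (hcont : ContinuousOn u (Ici 0))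
    (hu : ∀ x y, 0 ≤ x → x ≤ y → u y - u x ≤ c * (y - x)) :
    ∃! x, 0 ≤ x ∧ x = u x := by
  set b := u 0 / (1 - c)
  have hb : 0 ≤ b := div_nonneg h0 (sub_nonneg.2 hc.le)
  have hub : u b - b ≤ 0 := by
    have hcb : (1 - c) * b = u 0 := mul_div_cancel₀ _ (sub_ne_zero.2 hc.ne')
    linarith [hu 0 b le_rfl hb]
  have hroot : ∃! x, 0 ≤ x ∧ u x - x = 0 :=
    existsUnique_zero_of_strictAntiOn hb (hcont.sub continuousOn_id)
      (strictAntiOn_sub_id_of_sub_le_mul_sub hc fun x hx y _ hxy => hu x y hx hxy)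
      (by simpa using h0) hub
  simpa only [sub_eq_zero, eq_comm (a := u _)] using hroot

/-- Existence and uniqueness of the fluid potential waiting time: for each `t ≥ 0`
there is a unique `x ≥ 0` with `x = w(t + x)`. -/
theorem pwt_exists_unique
    (γ : ℝ) (hγ : γ ∈ Set.Ioc (0:ℝ) 1)
    (w : ℝ → ℝ)
    (hw_nonneg : ∀ t, 0 ≤ t → 0 ≤ w t)
    (hw_cont : ContinuousOn w (Set.Ici (0:ℝ)))
    (hw_growth : ∀ t₁ t₂, 0 ≤ t₁ → t₁ ≤ t₂ → w t₂ - w t₁ ≤ (1 - γ) * (t₂ - t₁)) :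
    ∀ t, 0 ≤ t → ∃! x : ℝ, 0 ≤ x ∧ x = w (t + x) := by
  intro t ht
  have hshift_cont : ContinuousOn (fun x => w (t + x)) (Ici 0) :=
    hw_cont.comp (continuousOn_const.add continuousOn_id) fun x hx =>
      mem_Ici.2 (add_nonneg ht hx)
  refine existsUnique_fixedPoint_of_sub_le_mul_sub (c := 1 - γ) (by linarith [hγ.1])
    (hw_nonneg _ (by simpa using ht)) hshift_cont fun x y hx hxy => ?_
  simpa using hw_growth (t + x) (t + y) (by linarith) (by linarith)
end

section
/- Let γ ∈ (0,1] and let w : [0,∞) → [0,∞) be continuous with w(0) = 0 and w(t₂) − w(t₁) ≤ (1−γ)(t₂ − t₁) for all 0 ≤ t₁ ≤ t₂. For t ≥ 0 let v(t) denote the unique x ≥ 0 with x = w(t + x). Then for every t ≥ 0 one has t − w(t) ≥ 0 and v(t − w(t)) = w(t). -/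
/-- For the fluid potential waiting time `v` (the unique fixed point `v(t) = w(t + v(t))`),
one has `t − w(t) ≥ 0` and `v(t − w(t)) = w(t)` for all `t ≥ 0`. -/
theorem pwt_hwt_relation
    (γ : ℝ) (hγ : γ ∈ Set.Ioc (0:ℝ) 1)
    (w : ℝ → ℝ)
    (hw_nonneg : ∀ t, 0 ≤ t → 0 ≤ w t)
    (hw_cont : ContinuousOn w (Set.Ici (0:ℝ)))
    (hw0 : w 0 = 0)
    (hw_growth : ∀ t₁ t₂, 0 ≤ t₁ → t₁ ≤ t₂ → w t₂ - w t₁ ≤ (1 - γ) * (t₂ - t₁))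
    (v : ℝ → ℝ)
    (hv : ∀ t, 0 ≤ t → 0 ≤ v t ∧ v t = w (t + v t)) :
    ∀ t, 0 ≤ t → 0 ≤ t - w t ∧ v (t - w t) = w t := by
  obtain ⟨hγ0, hγ1⟩ := hγ
  -- uniqueness of fixed points
  have uniq : ∀ s x y, 0 ≤ s → 0 ≤ x → 0 ≤ y → x = w (s + x) → y = w (s + y) → x = y := by
    have half : ∀ s x y, 0 ≤ s → 0 ≤ x → 0 ≤ y → x = w (s + x) → y = w (s + y) →
        y ≤ x → x ≤ y := by
      intro s x y hs hx hy hxe hye hle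
      have h := hw_growth (s + y) (s + x) (by linarith) (by linarith)
      rw [← hxe, ← hye] at h
      nlinarith
    intro s x y hs hx hy hxe hye
    rcases le_total x y with h | h
    · exact le_antisymm h (half s y x hs hy hx hye hxe h)
    · exact le_antisymm (half s x y hs hx hy hxe hye h) h
  intro t ht
  have hwt := hw_nonneg t ht
  have hg := hw_growth 0 t le_rfl ht
  rw [hw0] at hg
  have hst : 0 ≤ t - w t := by nlinarith
  refine ⟨hst, ?_⟩
  obtain ⟨hv0, hve⟩ := hv (t - w t) hst
  have hfix : w t = w ((t - w t) + w t) := by ring_nf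
  exact uniq (t - w t) (v (t - w t)) (w t) hst hv0 hwt hve hfix
end

section
/- Let γ ∈ (0,1] and let w : [0,∞) → [0,∞) be continuous and satisfy w(t₂) − w(t₁) ≤ (1−γ)(t₂ − t₁) for all 0 ≤ t₁ ≤ t₂. For t ≥ 0 let v(t) denote the unique x ≥ 0 with x = w(t + x). Then v is Lipschitz continuous with Lipschitz constant 1/γ; i.e., |v(t) − v(t′)| ≤ (1/γ)|t − t′| for all t, t′ ≥ 0. In particular, v is continuous. -/
/-- The fluid potential waiting time `v` (the unique fixed point `v(t) = w(t + v(t))`)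
is Lipschitz continuous with constant `1/γ` on `[0, ∞)`. -/
theorem pwt_lipschitz
    (γ : ℝ) (hγ : γ ∈ Set.Ioc (0:ℝ) 1)
    (w : ℝ → ℝ)
    (hw_nonneg : ∀ t, 0 ≤ t → 0 ≤ w t)
    (hw_cont : ContinuousOn w (Set.Ici (0:ℝ)))
    (hw_growth : ∀ t₁ t₂, 0 ≤ t₁ → t₁ ≤ t₂ → w t₂ - w t₁ ≤ (1 - γ) * (t₂ - t₁))
    (v : ℝ → ℝ)
    (hv : ∀ t, 0 ≤ t → 0 ≤ v t ∧ v t = w (t + v t)) :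
    ∀ t t', 0 ≤ t → 0 ≤ t' → |v t - v t'| ≤ (1 / γ) * |t - t'| := by
  obtain ⟨hγ0, hγ1⟩ := hγ
  have key : ∀ t t', 0 ≤ t → 0 ≤ t' → t ≤ t' →
      |v t - v t'| ≤ (1 / γ) * (t' - t) := by
    intro t t' ht ht' htt
    obtain ⟨hv1, he1⟩ := hv t ht
    obtain ⟨hv2, he2⟩ := hv t' ht'
    have hinv : (1:ℝ) ≤ 1 / γ := by
      rw [le_div_iff₀ hγ0]; linarith
    rw [abs_sub_le_iff]
    rcases le_total (t + v t) (t' + v t') with h | h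
    · have hg := hw_growth (t + v t) (t' + v t') (by linarith) h
      rw [← he1, ← he2] at hg
      constructor
      · -- v t - v t' ≤ t' - t ≤ (1/γ)(t'-t)
        have h1 : v t - v t' ≤ t' - t := by linarith
        have h2 : t' - t ≤ (1 / γ) * (t' - t) := by nlinarith
        linarith
      · -- γ (v t' - v t) ≤ (1-γ)(t'-t)
        have h1 : γ * (v t' - v t) ≤ (1 - γ) * (t' - t) := by nlinarith
        rw [div_mul_eq_mul_div, le_div_iff₀ hγ0]
        nlinarith
    · have hg := hw_growth (t' + v t') (t + v t) (by linarith) h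
      rw [← he1, ← he2] at hg
      have h1 : γ * (v t - v t') ≤ (1 - γ) * (t - t') := by nlinarith
      have h2 : v t - v t' ≤ 0 := by nlinarith
      have h3 : v t' - v t ≤ t - t' := by linarith
      have h4 : 0 ≤ (1 / γ) * (t' - t) := mul_nonneg (by positivity) (by linarith)
      constructor <;> linarith
  intro t t' ht ht'
  rcases le_total t t' with h | h
  · have : |t - t'| = t' - t := by rw [abs_sub_comm, abs_of_nonneg (by linarith)]
    rw [this]
    exact key t t' ht ht' h
  · have : |t - t'| = t - t' := abs_of_nonneg (by linarith)
    rw [this, abs_sub_comm]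
    exact key t' t ht' ht h
end

section
/- Let γ ∈ (0,1], let δ ≥ 0, and let w, w₁ : [0,∞) → [0,∞) be continuous functions, each satisfying the growth condition w(t₂) − w(t₁) ≤ (1−γ)(t₂ − t₁) and w₁(t₂) − w₁(t₁) ≤ (1−γ)(t₂ − t₁) for all 0 ≤ t₁ ≤ t₂, and suppose |w₁(u) − w(u)| ≤ δ for all u ≥ 0. Let v(t) and v₁(t) denote the unique nonnegative fixed points of x ↦ w(t + x) and x ↦ w₁(t + x), respectively. Then |v₁(t) − v(t)| ≤ δ/γ for every t ≥ 0. -/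
/-- Comparison bound for fluid potential waiting times: if `‖w₁ − w‖ ≤ δ` on `[0, ∞)`,
then the corresponding fixed points satisfy `|v₁(t) − v(t)| ≤ δ/γ` for all `t ≥ 0`. -/
theorem pwt_comparison_bound
    (γ δ : ℝ) (hγ : γ ∈ Set.Ioc (0:ℝ) 1) (hδ : 0 ≤ δ)
    (w w₁ : ℝ → ℝ)
    (hw_nonneg : ∀ u, 0 ≤ u → 0 ≤ w u) (hw₁_nonneg : ∀ u, 0 ≤ u → 0 ≤ w₁ u)
    (hw_cont : ContinuousOn w (Set.Ici (0:ℝ)))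
    (hw₁_cont : ContinuousOn w₁ (Set.Ici (0:ℝ)))
    (hw_growth : ∀ t₁ t₂, 0 ≤ t₁ → t₁ ≤ t₂ → w t₂ - w t₁ ≤ (1 - γ) * (t₂ - t₁))
    (hw₁_growth : ∀ t₁ t₂, 0 ≤ t₁ → t₁ ≤ t₂ → w₁ t₂ - w₁ t₁ ≤ (1 - γ) * (t₂ - t₁))
    (hclose : ∀ u, 0 ≤ u → |w₁ u - w u| ≤ δ)
    (v v₁ : ℝ → ℝ)
    (hv : ∀ t, 0 ≤ t → 0 ≤ v t ∧ v t = w (t + v t))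
    (hv₁ : ∀ t, 0 ≤ t → 0 ≤ v₁ t ∧ v₁ t = w₁ (t + v₁ t)) :
    ∀ t, 0 ≤ t → |v₁ t - v t| ≤ δ / γ := by
  obtain ⟨hγ0, hγ1⟩ := hγ
  intro t ht
  obtain ⟨ha, hae⟩ := hv t ht
  obtain ⟨hb, hbe⟩ := hv₁ t ht
  set a := v t with hadef
  set b := v₁ t with hbdef
  have hta : 0 ≤ t + a := by linarith
  have htb : 0 ≤ t + b := by linarith
  rw [abs_sub_le_iff]
  constructor
  · -- b - a ≤ δ/γ
    rcases le_or_gt b a with h | h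
    · have : (0:ℝ) ≤ δ / γ := div_nonneg hδ hγ0.le
      linarith
    · have hg := hw₁_growth (t + a) (t + b) hta (by linarith)
      have hc := (abs_le.mp (hclose (t + a) hta)).2
      have heq : b - a = (w₁ (t + b) - w₁ (t + a)) + (w₁ (t + a) - w (t + a)) := by
        rw [← hae, ← hbe]; ring
      have hg' : w₁ (t + b) - w₁ (t + a) ≤ (1 - γ) * (b - a) := by
        calc w₁ (t + b) - w₁ (t + a) ≤ (1 - γ) * ((t + b) - (t + a)) := hg
          _ = (1 - γ) * (b - a) := by ring
      rw [le_div_iff₀ hγ0]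
      nlinarith
  · -- a - b ≤ δ/γ
    rcases le_or_gt a b with h | h
    · have : (0:ℝ) ≤ δ / γ := div_nonneg hδ hγ0.le
      linarith
    · have hg := hw_growth (t + b) (t + a) htb (by linarith)
      have hc := (abs_le.mp (hclose (t + b) htb)).1
      have heq : a - b = (w (t + a) - w (t + b)) + (w (t + b) - w₁ (t + b)) := by
        rw [← hae, ← hbe]; ring
      have hg' : w (t + a) - w (t + b) ≤ (1 - γ) * (a - b) := by
        calc w (t + a) - w (t + b) ≤ (1 - γ) * ((t + a) - (t + b)) := hg
          _ = (1 - γ) * (a - b) := by ring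
      rw [le_div_iff₀ hγ0]
      nlinarith
end

section
/- Let γ ∈ (0,1] and let w : [0,∞) → [0,∞) be continuous and satisfy w(t₂) − w(t₁) ≤ (1−γ)(t₂ − t₁) for all 0 ≤ t₁ ≤ t₂. For t ≥ 0 let v(t) denote the unique x ≥ 0 with x = w(t + x). Fix t > 0 and suppose w is differentiable at the point s₀ := t + v(t), with derivative w′(s₀) (necessarily w′(s₀) ≤ 1 − γ, so 1 − w′(s₀) ≥ γ > 0). Then v is differentiable at t and v′(t) = w′(s₀) / (1 − w′(s₀)). -/
/-!
The map `g u = u + v u` is a right inverse of `f s = s - w s` on `[0, ∞)`, and the growth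
condition on `w` says that `s ↦ f s - γ s` is monotone there, i.e. `f` expands distances by at
least the factor `γ`. Hence `g` is `γ⁻¹`-Lipschitz, in particular continuous, and `f' ≥ γ > 0`,
so the one-dimensional inverse function theorem gives `g'(t) = 1 / (1 - w'(t + v t))`; subtract
the derivative of the identity.
-/

open Set Filter Topology NNReal

section

variable {f g : ℝ → ℝ} {s t : Set ℝ} {γ : ℝ≥0}

theorem HasDerivAt.le_of_monotoneOn_sub_mul {f' x c : ℝ} (hf : HasDerivAt f f' x)
    (hs : s ∈ 𝓝 x) (hmono : MonotoneOn (fun y ↦ f y - c * y) s) : c ≤ f' := by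
  have hacc : AccPt x (𝓟 s) :=
    ((PerfectSpace.univ_preperfect x (mem_univ x)).nhds_inter hs).mono
      (principal_mono.2 inter_subset_left)
  have := ((hf.sub ((hasDerivAt_id x).const_mul c)).hasDerivWithinAt (s := s)).nonneg_of_monotoneOn
    hacc hmono
  linarith

theorem antilipschitzWith_domRestrict_of_monotoneOn_sub_mul (hγ : 0 < γ)
    (hf : MonotoneOn (fun x ↦ f x - γ * x) s) : AntilipschitzWith γ⁻¹ (s.domRestrict f) := by
  have key : ∀ x ∈ s, ∀ y ∈ s, x ≤ y → dist x y ≤ (γ⁻¹ : ℝ≥0) * dist (f x) (f y) := by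
    intro x hx y hy hxy
    have hexp : γ * (y - x) ≤ f y - f x := by linarith [hf hx hy hxy]
    calc dist x y = y - x := by rw [dist_comm, Real.dist_eq, abs_of_nonneg (sub_nonneg.2 hxy)]
      _ ≤ γ⁻¹ * (f y - f x) := by
        rwa [NNReal.coe_inv, inv_mul_eq_div, le_div_iff₀' (by exact_mod_cast hγ)]
      _ ≤ γ⁻¹ * dist (f x) (f y) := by
        rw [dist_comm, Real.dist_eq]
        gcongr
        exact le_abs_self _
  refine AntilipschitzWith.of_le_mul_dist fun x y ↦ ?_
  rcases le_total x y with hxy | hyx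
  · exact key x x.2 y y.2 hxy
  · rw [dist_comm x, dist_comm (s.domRestrict f x)]
    exact key y y.2 x x.2 hyx

theorem HasDerivAt.of_rightInvOn_of_monotoneOn_sub_mul {f' a : ℝ} (hγ : 0 < γ)
    (hf : MonotoneOn (fun x ↦ f x - γ * x) s) (hg : MapsTo g t s) (hfg : RightInvOn g f t)
    (ht : t ∈ 𝓝 a) (hs : s ∈ 𝓝 (g a)) (hf' : HasDerivAt f f' (g a)) :
    HasDerivAt g f'⁻¹ a := by
  have hg_cont : ContinuousOn g t := continuousOn_iff_continuous_domRestrict.2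
    ((antilipschitzWith_domRestrict_of_monotoneOn_sub_mul hγ hf).to_rightInvOn' hg hfg).continuous
  have hγf' : (γ : ℝ) ≤ f' := hf'.le_of_monotoneOn_sub_mul hs hf
  exact hf'.of_local_left_inverse (hg_cont.continuousAt ht)
    (lt_of_lt_of_le (by exact_mod_cast hγ) hγf').ne' (eventually_of_mem ht hfg)

end

theorem pwt_deriv_general
    (γ : ℝ) (hγ : γ ∈ Set.Ioc (0:ℝ) 1)
    (w : ℝ → ℝ)
    (hw_growth : ∀ t₁ t₂, 0 ≤ t₁ → t₁ ≤ t₂ → w t₂ - w t₁ ≤ (1 - γ) * (t₂ - t₁))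
    (v : ℝ → ℝ)
    (hv : ∀ u, 0 ≤ u → 0 ≤ v u ∧ v u = w (u + v u))
    (t : ℝ) (ht : 0 < t)
    (d : ℝ) (hw' : HasDerivAt w d (t + v t)) :
    HasDerivAt v (d / (1 - d)) t := by
  let γ' : ℝ≥0 := ⟨γ, hγ.1.le⟩
  have hγ' : 0 < γ' := hγ.1
  have hf_mono : MonotoneOn (fun s ↦ (s - w s) - γ' * s) (Ici 0) :=
    fun a ha b _ hab ↦ show a - w a - γ * a ≤ b - w b - γ * b by linarith [hw_growth a b ha hab]
  have hmaps : MapsTo (fun u ↦ u + v u) (Ici 0) (Ici 0) :=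
    fun u hu ↦ add_nonneg hu (hv u hu).1
  have hinv : RightInvOn (fun u ↦ u + v u) (fun s ↦ s - w s) (Ici 0) :=
    fun u hu ↦ by dsimp only; linarith [(hv u hu).2]
  have hpos : 0 < t + v t := by linarith [(hv t ht.le).1]
  have hf' : HasDerivAt (fun s ↦ s - w s) (1 - d) (t + v t) := (hasDerivAt_id' _).fun_sub hw'
  have hγd : (γ' : ℝ) ≤ 1 - d := hf'.le_of_monotoneOn_sub_mul (Ici_mem_nhds hpos) hf_mono
  have hd : 1 - d ≠ 0 := ((NNReal.coe_pos.2 hγ').trans_le hγd).ne'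
  have hg' : HasDerivAt (fun u ↦ u + v u) (1 - d)⁻¹ t :=
    hf'.of_rightInvOn_of_monotoneOn_sub_mul hγ' hf_mono hmaps hinv (Ici_mem_nhds ht)
      (Ici_mem_nhds hpos)
  have hv' : HasDerivAt v ((1 - d)⁻¹ - 1) t := by
    simpa only [add_sub_cancel_left] using hg'.fun_sub (hasDerivAt_id' t)
  convert hv' using 1
  field_simp
  ring

/-- Differentiability of the fluid potential waiting time: if `w` is differentiable at
`s₀ = t + v(t)` with derivative `d`, then `v` is differentiable at `t > 0` with
`v′(t) = d / (1 − d)`. -/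
theorem pwt_deriv
    (γ : ℝ) (hγ : γ ∈ Set.Ioc (0:ℝ) 1)
    (w : ℝ → ℝ)
    (hw_nonneg : ∀ u, 0 ≤ u → 0 ≤ w u)
    (hw_cont : ContinuousOn w (Set.Ici (0:ℝ)))
    (hw_growth : ∀ t₁ t₂, 0 ≤ t₁ → t₁ ≤ t₂ → w t₂ - w t₁ ≤ (1 - γ) * (t₂ - t₁))
    (v : ℝ → ℝ)
    (hv : ∀ u, 0 ≤ u → 0 ≤ v u ∧ v u = w (u + v u))
    (t : ℝ) (ht : 0 < t)
    (d : ℝ) (hw' : HasDerivAt w d (t + v t)) :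
    HasDerivAt v (d / (1 - d)) t :=
  pwt_deriv_general γ hγ w hw_growth v hv t ht d hw'
end
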